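/- Let 𝒢=(V,E) be a temporal graph, s,z∈V, and x,δ∈ℕ. There exists an x-traversal-delay-robust (s,z)-route in 𝒢 if and only if there exists an x-starting-delay-robust (s,z)-route in 𝒢 (i.e., the traversal-delay and starting-delay versions of Delay-Robust Path have exactly the same yes-instances). -/

import Mathlib

/-- A time arc of a temporal graph: start vertex, end vertex, time label, traversal time. -/
structure TimeArc (V : Type) where
  src : V
  dst : V
  time : ℕ
  trav : ℕ
deriving DecidableEq

variable {V : Type}

/-- `P` is a `D`-traversal-delayed temporal walk in the temporal graph with time-arc set `E`
(with delay time `δ`). -/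
def IsTDWalk [DecidableEq V] (E D : Finset (TimeArc V)) (δ : ℕ)
    (P : List (TimeArc V)) : Prop :=
  (∀ e ∈ P, e ∈ E) ∧
  P.Chain' (fun e f => f.src = e.dst ∧
    e.time + e.trav + (if e ∈ D then δ else 0) ≤ f.time)

/-- `P` is a `D`-starting-delayed temporal walk in the temporal graph with time-arc set `E`
(with delay time `δ`). -/
def IsSDWalk [DecidableEq V] (E D : Finset (TimeArc V)) (δ : ℕ)
    (P : List (TimeArc V)) : Prop :=
  (∀ e ∈ P, e ∈ E) ∧
  P.Chain' (fun e f => f.src = e.dst ∧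
    e.time + e.trav + (if e ∈ D then δ else 0) ≤ f.time + (if f ∈ D then δ else 0))

/-- The sequence of vertices visited by a walk: the start vertex of its first arc followed by
the end vertices of all its arcs. -/
def visits : List (TimeArc V) → List V
  | [] => []
  | e :: es => e.src :: (e :: es).map TimeArc.dst

/-- The walk `P` follows the route `R`: the visited vertex sequence of `P` equals `R`
(the empty walk follows every single-vertex route). -/
def Follows (P : List (TimeArc V)) (R : List V) : Prop :=
  match P with
  | [] => ∃ v, R = [v]
  | e :: es => visits (e :: es) = R

/-- `R` is a `D`-traversal-delayed route: some `D`-traversal-delayed temporal walk follows `R`. -/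
def IsTDRoute [DecidableEq V] (E D : Finset (TimeArc V)) (δ : ℕ) (R : List V) : Prop :=
  ∃ P : List (TimeArc V), IsTDWalk E D δ P ∧ Follows P R

/-- `R` is a `D`-starting-delayed route: some `D`-starting-delayed temporal walk follows `R`. -/
def IsSDRoute [DecidableEq V] (E D : Finset (TimeArc V)) (δ : ℕ) (R : List V) : Prop :=
  ∃ P : List (TimeArc V), IsSDWalk E D δ P ∧ Follows P R

/-- `R` is `x`-traversal-delay-robust: it is a `D`-traversal-delayed route for every
`D ⊆ E` with `|D| ≤ x`. -/
def TDRobust [DecidableEq V] (E : Finset (TimeArc V)) (δ x : ℕ) (R : List V) : Prop :=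
  ∀ D : Finset (TimeArc V), D ⊆ E → D.card ≤ x → IsTDRoute E D δ R

/-- `R` is `x`-starting-delay-robust: it is a `D`-starting-delayed route for every
`D ⊆ E` with `|D| ≤ x`. -/
def SDRobust [DecidableEq V] (E : Finset (TimeArc V)) (δ x : ℕ) (R : List V) : Prop :=
  ∀ D : Finset (TimeArc V), D ⊆ E → D.card ≤ x → IsSDRoute E D δ R


/-! ### Auxiliary definitions and lemmas -/

section AuxDRR
variable [DecidableEq V]

/-- Effective arrival time of an arc under delay set `D`. -/
def arrD (D : Finset (TimeArc V)) (δ : ℕ) (e : TimeArc V) : ℕ :=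
  e.time + e.trav + (if e ∈ D then δ else 0)

/-- Effective starting time of an arc under starting-delay set `D`. -/
def depD (D : Finset (TimeArc V)) (δ : ℕ) (e : TimeArc V) : ℕ :=
  e.time + (if e ∈ D then δ else 0)

/-- Traversal-delayed feasibility of the route `u :: R`, starting no earlier than `r`. -/
def TDW (E D : Finset (TimeArc V)) (δ : ℕ) : ℕ → V → List V → Prop
  | _, _, [] => True
  | r, u, w :: R => ∃ e, e ∈ E ∧ e.src = u ∧ e.dst = w ∧ r ≤ e.time ∧
      TDW E D δ (arrD D δ e) w R

/-- Starting-delayed feasibility of the route `u :: R`, starting no earlier than `r`. -/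
def SDW (E D : Finset (TimeArc V)) (δ : ℕ) : ℕ → V → List V → Prop
  | _, _, [] => True
  | r, u, w :: R => ∃ e, e ∈ E ∧ e.src = u ∧ e.dst = w ∧ r ≤ depD D δ e ∧
      SDW E D δ (arrD D δ e) w R

variable {E D : Finset (TimeArc V)} {δ : ℕ}

lemma sdw_mono {R : List V} {u : V} {r r' : ℕ} (h : r' ≤ r)
    (hs : SDW E D δ r u R) : SDW E D δ r' u R := by
  cases R with
  | nil => trivial
  | cons w R =>
    obtain ⟨e, h1, h2, h3, h4, h5⟩ := hs
    exact ⟨e, h1, h2, h3, le_trans h h4, h5⟩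

lemma sdw_congr {D₁ D₂ : Finset (TimeArc V)} :
    ∀ (R : List V) (u : V), (∀ e : TimeArc V, e.src ∈ u :: R → (e ∈ D₁ ↔ e ∈ D₂)) →
    ∀ r, SDW E D₁ δ r u R → SDW E D₂ δ r u R := by
  intro R
  induction R with
  | nil => intro u _ r _; trivial
  | cons w R ih =>
    intro u h r hs
    obtain ⟨e, h1, h2, h3, h4, h5⟩ := hs
    have hiff : e ∈ D₁ ↔ e ∈ D₂ := h e (by rw [h2]; exact List.mem_cons_self)
    have harr : arrD D₁ δ e = arrD D₂ δ e := by
      unfold arrD; rw [if_congr hiff rfl rfl]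
    have hdep : depD D₁ δ e = depD D₂ δ e := by
      unfold depD; rw [if_congr hiff rfl rfl]
    refine ⟨e, h1, h2, h3, hdep ▸ h4, ?_⟩
    rw [harr] at h5
    exact ih w (fun e' hm => h e' (List.mem_cons_of_mem _ hm)) _ h5

/-- From `TDW` feasibility, construct an actual traversal-delayed walk. -/
lemma tdw_to_walk : ∀ (R : List V) (u : V) (r : ℕ), TDW E D δ r u R →
    ∃ P : List (TimeArc V), IsTDWalk E D δ P ∧ Follows P (u :: R) ∧
      (∀ e, P.head? = some e → r ≤ e.time) := by
  intro R
  induction R with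
  | nil =>
    intro u r _
    exact ⟨[], ⟨by simp, List.isChain_nil⟩, ⟨u, rfl⟩, by simp⟩
  | cons w R ih =>
    intro u r h
    obtain ⟨e, he, hsrc, hdst, hr, hrec⟩ := h
    obtain ⟨P, ⟨hPE, hPC⟩, hPF, hPhd⟩ := ih w (arrD D δ e) hrec
    refine ⟨e :: P, ⟨?_, ?_⟩, ?_, ?_⟩
    · intro a ha
      rcases List.mem_cons.mp ha with h' | h'
      · exact h' ▸ he
      · exact hPE a h'
    · cases P with
      | nil => exact List.isChain_singleton e
      | cons f P' =>
        refine List.isChain_cons_cons.mpr ⟨⟨?_, hPhd f rfl⟩, hPC⟩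
        have : visits (f :: P') = w :: R := hPF
        have hh : f.src = w := by
          simpa [visits] using congrArg List.head? this
        rw [hh, hdst]
    · show visits (e :: P) = u :: w :: R
      cases P with
      | nil =>
        obtain ⟨v, hv⟩ := hPF
        have : w = v ∧ R = [] := by
          constructor
          · simpa using congrArg List.head? hv
          · simpa using congrArg List.tail hv
        simp [visits, hsrc, hdst, this.2]
      | cons f P' =>
        have : visits (f :: P') = w :: R := hPF
        have hmap : (f :: P').map TimeArc.dst = R := by
          simpa [visits] using congrArg List.tail this
        simp [visits, hsrc, hdst] at hmap ⊢
        exact hmap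
    · intro a ha
      simp at ha
      exact ha ▸ hr

/-- From an actual starting-delayed walk, get `SDW` feasibility. -/
lemma sdw_of_walk : ∀ (P : List (TimeArc V)) (R : List V) (u : V) (r : ℕ),
    IsSDWalk E D δ P → Follows P (u :: R) →
    (∀ e, P.head? = some e → r ≤ depD D δ e) → SDW E D δ r u R := by
  intro P
  induction P with
  | nil =>
    intro R u r _ hF _
    obtain ⟨v, hv⟩ := hF
    have : R = [] := by simpa using congrArg List.tail hv
    rw [this]; trivial
  | cons e P' ih =>
    intro R u r hW hF hhd
    have hvis : visits (e :: P') = u :: R := hF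
    have hsrc : e.src = u := by simpa [visits] using congrArg List.head? hvis
    have hmap : e.dst :: P'.map TimeArc.dst = R := by
      simpa [visits] using congrArg List.tail hvis
    rw [← hmap]
    refine ⟨e, hW.1 e (List.mem_cons_self), hsrc, rfl, hhd e rfl, ?_⟩
    apply ih (P'.map TimeArc.dst) e.dst (arrD D δ e)
    · exact ⟨fun a ha => hW.1 a (List.mem_cons_of_mem _ ha), hW.2.tail⟩
    · cases P' with
      | nil => exact ⟨e.dst, rfl⟩
      | cons f P'' =>
        have hfs : f.src = e.dst := (List.isChain_cons_cons.mp hW.2).1.1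
        show visits (f :: P'') = e.dst :: (f :: P'').map TimeArc.dst
        simp [visits, hfs]
    · intro f hf
      cases P' with
      | nil => simp at hf
      | cons g P'' =>
        simp at hf
        subst hf
        exact (List.isChain_cons_cons.mp hW.2).1.2

/-- Core lemma: on a route without repeated vertices, if some delay set blocks the
traversal-delay model, then a subset of it blocks the starting-delay model. -/
lemma core_lemma (E : Finset (TimeArc V)) (δ : ℕ) :
    ∀ (R : List V) (u : V), (u :: R).Nodup → ∀ (D : Finset (TimeArc V)) (r : ℕ),
      ¬ TDW E D δ r u R → ∃ D', D' ⊆ D ∧ ¬ SDW E D' δ r u R := by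
  intro R
  induction R with
  | nil => intro u _ D r h; exact absurd trivial h
  | cons w R' ih =>
    intro u hnd D r h
    have hu : u ∉ w :: R' := (List.nodup_cons.mp hnd).1
    set T := E.filter (fun e => e.src = u ∧ e.dst = w ∧ r ≤ e.time) with hTdef
    by_cases hTne : T.Nonempty
    · have hne : (T.image (arrD D δ)).Nonempty := hTne.image _
      set r₁ := (T.image (arrD D δ)).min' hne with hr₁
      obtain ⟨estar, hesT, hesA⟩ := Finset.mem_image.mp ((T.image (arrD D δ)).min'_mem hne)
      obtain ⟨hesE, hessrc, hesdst, hestime⟩ :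
          estar ∈ E ∧ estar.src = u ∧ estar.dst = w ∧ r ≤ estar.time := by
        have := Finset.mem_filter.mp hesT
        exact ⟨this.1, this.2.1, this.2.2.1, this.2.2.2⟩
      have hnt : ¬ TDW E D δ r₁ w R' := by
        intro hc
        exact h ⟨estar, hesE, hessrc, hesdst, hestime, hesA ▸ hc⟩
      obtain ⟨D'', hsub, hns⟩ := ih w (List.Nodup.of_cons hnd) D r₁ hnt
      refine ⟨D.filter (fun e => (e ∈ D'' ∧ ¬(e.src = u ∧ e.dst = w)) ∨
        (e.src = u ∧ e.dst = w ∧ r ≤ e.time)), Finset.filter_subset _ _, ?_⟩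
      set D' := D.filter (fun e => (e ∈ D'' ∧ ¬(e.src = u ∧ e.dst = w)) ∨
        (e.src = u ∧ e.dst = w ∧ r ≤ e.time)) with hD'def
      rintro ⟨e, he, hsrc, hdst, hdep, hrec⟩
      by_cases hres : r ≤ e.time
      · have heT : e ∈ T := Finset.mem_filter.mpr ⟨he, hsrc, hdst, hres⟩
        have hmem : e ∈ D' ↔ e ∈ D := by
          simp [hD'def, Finset.mem_filter, hsrc, hdst, hres]
        have harr' : arrD D' δ e = arrD D δ e := by
          unfold arrD; rw [if_congr hmem rfl rfl]
        have hmin : r₁ ≤ arrD D δ e :=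
          Finset.min'_le _ _ (Finset.mem_image_of_mem _ heT)
        rw [harr'] at hrec
        have h1 : SDW E D' δ r₁ w R' := sdw_mono hmin hrec
        have hiff : ∀ e' : TimeArc V, e'.src ∈ w :: R' → (e' ∈ D' ↔ e' ∈ D'') := by
          intro e' hm
          have hneq : ¬ (e'.src = u) := fun hq => hu (hq ▸ hm)
          constructor
          · intro hx
            rcases (Finset.mem_filter.mp hx).2 with ⟨h1', _⟩ | ⟨h1', _⟩
            · exact h1'
            · exact absurd h1' hneq
          · intro hx
            exact Finset.mem_filter.mpr ⟨hsub hx, Or.inl ⟨hx, fun hc => hneq hc.1⟩⟩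
        exact hns (sdw_congr R' w hiff r₁ h1)
      · have hnm : e ∉ D' := by
          intro hx
          rcases (Finset.mem_filter.mp hx).2 with ⟨_, h2'⟩ | ⟨_, _, h3'⟩
          · exact h2' ⟨hsrc, hdst⟩
          · exact hres h3'
        have : depD D' δ e = e.time := by
          unfold depD; rw [if_neg hnm, Nat.add_zero]
        rw [this] at hdep
        exact hres hdep
    · refine ⟨D.filter (fun e => ¬(e.src = u ∧ e.dst = w)), Finset.filter_subset _ _, ?_⟩
      rintro ⟨e, he, hsrc, hdst, hdep, -⟩
      have hnm : e ∉ D.filter (fun e => ¬(e.src = u ∧ e.dst = w)) := by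
        intro hx
        exact (Finset.mem_filter.mp hx).2 ⟨hsrc, hdst⟩
      have : depD (D.filter (fun e => ¬(e.src = u ∧ e.dst = w))) δ e = e.time := by
        unfold depD; rw [if_neg hnm, Nat.add_zero]
      rw [this] at hdep
      exact hTne ⟨e, Finset.mem_filter.mpr ⟨he, hsrc, hdst, hdep⟩⟩

lemma sdw_suffix {v : V} {C : List V} :
    ∀ (B : List V) (u : V) (s : ℕ), SDW E D δ s u (B ++ v :: C) →
      ∃ s', s ≤ s' ∧ SDW E D δ s' v C := by
  intro B
  induction B with
  | nil =>
    intro u s hs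
    obtain ⟨e, _, _, _, h4, h5⟩ := hs
    refine ⟨arrD D δ e, ?_, h5⟩
    calc s ≤ depD D δ e := h4
    _ ≤ arrD D δ e := by unfold depD arrD; omega
  | cons b B ih =>
    intro u s hs
    obtain ⟨e, _, _, _, h4, h5⟩ := hs
    obtain ⟨s', hs', hsd⟩ := ih b (arrD D δ e) h5
    refine ⟨s', le_trans (le_trans h4 ?_) hs', hsd⟩
    unfold depD arrD; omega

lemma sdw_removal {v : V} {B C : List V} :
    ∀ (M : List V) (u : V) (r : ℕ), SDW E D δ r u (M ++ v :: (B ++ v :: C)) →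
      SDW E D δ r u (M ++ v :: C) := by
  intro M
  induction M with
  | nil =>
    intro u r hs
    obtain ⟨e, h1, h2, h3, h4, h5⟩ := hs
    obtain ⟨s', hle, hsd⟩ := sdw_suffix B v (arrD D δ e) h5
    exact ⟨e, h1, h2, h3, h4, sdw_mono hle hsd⟩
  | cons m M ih =>
    intro u r hs
    obtain ⟨e, h1, h2, h3, h4, h5⟩ := hs
    exact ⟨e, h1, h2, h3, h4, ih m (arrD D δ e) h5⟩

end AuxDRR

lemma exists_dup_decomp {W : Type} : ∀ (L : List W), ¬ L.Nodup →
    ∃ (A : List W) (v : W) (B C : List W), L = A ++ v :: (B ++ v :: C) := by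
  intro L
  induction L with
  | nil => intro h; exact absurd List.nodup_nil h
  | cons a l ih =>
    intro h
    by_cases ha : a ∈ l
    · obtain ⟨B, C, rfl⟩ := List.append_of_mem ha
      exact ⟨[], a, B, C, rfl⟩
    · have : ¬ l.Nodup := fun hn => h (List.nodup_cons.mpr ⟨ha, hn⟩)
      obtain ⟨A, v, B, C, rfl⟩ := ih this
      exact ⟨a :: A, v, B, C, rfl⟩

/-- `SDW` feasibility of a full route given as a single list. -/
def SDWL [DecidableEq V] (E D : Finset (TimeArc V)) (δ : ℕ) : List V → Prop
  | [] => True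
  | u :: R => SDW E D δ 0 u R

lemma dedup_route [DecidableEq V] {E : Finset (TimeArc V)} {δ x : ℕ} :
    ∀ (n : ℕ) (L : List V), L.length ≤ n →
    (∀ D, D ⊆ E → D.card ≤ x → SDWL E D δ L) →
    ∃ L', L'.Nodup ∧ L'.head? = L.head? ∧ L'.getLast? = L.getLast? ∧
      (∀ D, D ⊆ E → D.card ≤ x → SDWL E D δ L') := by
  intro n
  induction n with
  | zero =>
    intro L hL h
    have : L = [] := List.length_eq_zero_iff.mp (Nat.le_zero.mp hL)
    exact ⟨L, this ▸ List.nodup_nil, rfl, rfl, h⟩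
  | succ n ih =>
    intro L hL h
    by_cases hnd : L.Nodup
    · exact ⟨L, hnd, rfl, rfl, h⟩
    · obtain ⟨A, v, B, C, rfl⟩ := exists_dup_decomp L hnd
      have hlen : (A ++ v :: C).length ≤ n := by
        simp [List.length_append] at hL ⊢
        omega
      have hhead : (A ++ v :: C).head? = (A ++ v :: (B ++ v :: C)).head? := by
        cases A with
        | nil => rfl
        | cons a A => rfl
      have hlast : (A ++ v :: C).getLast? = (A ++ v :: (B ++ v :: C)).getLast? := by
        rw [List.getLast?_append_cons, List.getLast?_append_cons,
          show v :: (B ++ v :: C) = (v :: B) ++ v :: C by simp,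
          List.getLast?_append_cons]
      have hsd : ∀ D, D ⊆ E → D.card ≤ x → SDWL E D δ (A ++ v :: C) := by
        intro D hDE hDx
        have hs := h D hDE hDx
        cases A with
        | nil =>
          show SDW E D δ 0 v C
          obtain ⟨s', _, hsd'⟩ := sdw_suffix B v 0 (hs : SDW E D δ 0 v (B ++ v :: C))
          exact sdw_mono (Nat.zero_le _) hsd'
        | cons a A =>
          exact sdw_removal (A) a 0 (hs : SDW E D δ 0 a (A ++ v :: (B ++ v :: C)))
      obtain ⟨L', h1, h2, h3, h4⟩ := ih (A ++ v :: C) hlen hsd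
      exact ⟨L', h1, h2.trans hhead, h3.trans hlast, h4⟩

theorem statement6 {V : Type} [DecidableEq V] (E : Finset (TimeArc V))
    (s z : V) (x δ : ℕ) :
    (∃ R : List V, R.head? = some s ∧ R.getLast? = some z ∧ TDRobust E δ x R) ↔
    (∃ R : List V, R.head? = some s ∧ R.getLast? = some z ∧ SDRobust E δ x R) := by
  constructor
  · rintro ⟨R, hs, hz, hTD⟩
    refine ⟨R, hs, hz, fun D hDE hDx => ?_⟩
    obtain ⟨P, ⟨hPE, hPC⟩, hPF⟩ := hTD D hDE hDx
    exact ⟨P, ⟨hPE, hPC.imp (fun a b hab =>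
      ⟨hab.1, le_trans hab.2 (Nat.le_add_right _ _)⟩)⟩, hPF⟩
  · rintro ⟨R, hs, hz, hSD⟩
    obtain ⟨R₀, rfl⟩ : ∃ R₀, R = s :: R₀ := by
      cases R with
      | nil => simp at hs
      | cons a R₀ =>
        simp at hs
        exact ⟨R₀, by rw [hs]⟩
    have hW : ∀ D, D ⊆ E → D.card ≤ x → SDWL E D δ (s :: R₀) := by
      intro D hDE hDx
      obtain ⟨P, hP, hF⟩ := hSD D hDE hDx
      exact sdw_of_walk P R₀ s 0 hP hF (fun e _ => Nat.zero_le _)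
    obtain ⟨L', hnd, hh, hl, hW'⟩ := dedup_route (s :: R₀).length (s :: R₀) le_rfl hW
    obtain ⟨R₁, rfl⟩ : ∃ R₁, L' = s :: R₁ := by
      cases L' with
      | nil => simp at hh
      | cons a R₁ =>
        simp at hh
        exact ⟨R₁, by rw [hh]⟩
    refine ⟨s :: R₁, rfl, hl.trans hz, fun D hDE hDx => ?_⟩
    have hT : TDW E D δ 0 s R₁ := by
      by_contra hC
      obtain ⟨D', hsub, hns⟩ := core_lemma E δ R₁ s hnd D 0 hC
      exact hns (hW' D' (hsub.trans hDE) (le_trans (Finset.card_le_card hsub) hDx))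
    obtain ⟨P, hP, hF, -⟩ := tdw_to_walk R₁ s 0 hT
    exact ⟨P, hP, hF⟩
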